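/- arXiv:1307.0168 — 3 statements merged into one kernel-verified Lean document; each statement's English description precedes it below -/
import Mathlib

section
/- Let G be a non-complete simple graph on n vertices that contains no clique of size r+1 (r ≥ 2). Then the algebraic connectivity satisfies α(G) ≤ n - ⌈n/r⌉. -/
/-!
Fiedler's bound `α(G) ≤ δ(G)` for non-complete `G` comes from the Rayleigh quotient of
`#S • e_v - 𝟙_S`, where `v` has minimum degree and `S` is its closed non-neighbourhood: the
vector sums to zero and only edges leaving `S` contribute to `xᵀ L x`.
For the degree bound, take a maximum clique `K`; it has at most `r` vertices and, by maximality,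
every vertex lies in the closed non-neighbourhood of some vertex of `K`. Hence
`n ≤ r (n - δ)`, i.e. `δ ≤ n - ⌈n / r⌉`.
-/

open SimpleGraph Matrix BigOperators

/-- The algebraic connectivity of a graph on a finite vertex set: the second-smallest
Laplacian eigenvalue, characterized as the infimum of Rayleigh quotients of the
Laplacian over nonzero vectors orthogonal to the all-ones vector. -/
noncomputable def algConn {V : Type*} [Fintype V] (G : SimpleGraph V) : ℝ :=
  letI := Classical.decEq V
  letI := Classical.decRel G.Adj
  sInf { a : ℝ | ∃ x : V → ℝ, x ≠ 0 ∧ ∑ v, x v = 0 ∧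
    a = (x ⬝ᵥ (G.lapMatrix ℝ).mulVec x) / (x ⬝ᵥ x) }

open Finset

namespace SimpleGraph

variable {V : Type*}

lemma IsClique.card_le_of_cliqueFree {G : SimpleGraph V} {r : ℕ} {K : Finset V}
    (hK : G.IsClique (K : Set V)) (hfree : G.CliqueFree (r + 1)) : #K ≤ r := by
  by_contra! hlt
  exact (⟨hK, rfl⟩ : G.IsNClique #K K).not_cliqueFree (hfree.mono hlt)

variable [Fintype V] [DecidableEq V] (G : SimpleGraph V) [DecidableRel G.Adj]

variable {G} in
lemma IsMaximumClique.exists_mem_compl_neighborFinset {K : Finset V} (hK : G.IsMaximumClique K)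
    (w : V) :
    ∃ u ∈ K, w ∈ (G.neighborFinset u)ᶜ := by
  by_cases hw : w ∈ K
  · exact ⟨w, hw, by simp⟩
  by_contra! hadj
  have hclique : G.IsClique (insert w K : Finset V) := by
    rw [coe_insert]
    exact hK.isClique.insert fun u hu _ => by simpa [adj_comm] using hadj u hu
  have := hK.maximum _ hclique
  rw [card_insert_of_notMem hw] at this
  omega

theorem card_le_mul_card_sub_minDegree {r : ℕ} (hfree : G.CliqueFree (r + 1)) :
    Fintype.card V ≤ r * (Fintype.card V - G.minDegree) := by
  obtain ⟨K, hK⟩ := G.maximumClique_exists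
  have hcover : (univ : Finset V) ⊆ K.biUnion fun u => (G.neighborFinset u)ᶜ := fun w _ => by
    simpa only [mem_biUnion] using hK.exists_mem_compl_neighborFinset w
  calc Fintype.card V
      ≤ ∑ u ∈ K, #(G.neighborFinset u)ᶜ := (card_le_card hcover).trans card_biUnion_le
    _ = ∑ u ∈ K, (Fintype.card V - G.degree u) := by simp [card_compl]
    _ ≤ ∑ _u ∈ K, (Fintype.card V - G.minDegree) := by
        gcongr with u; exact G.minDegree_le_degree u
    _ = #K * (Fintype.card V - G.minDegree) := by rw [sum_const, smul_eq_mul]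
    _ ≤ r * (Fintype.card V - G.minDegree) := by
        gcongr; exact hK.isClique.card_le_of_cliqueFree hfree

theorem minDegree_le_card_sub_ceil_div {r : ℕ} (hfree : G.CliqueFree (r + 1)) :
    (G.minDegree : ℝ) ≤ Fintype.card V - ⌈(Fintype.card V : ℝ) / r⌉ := by
  have hδ : G.minDegree ≤ Fintype.card V := by
    rcases isEmpty_or_nonempty V
    · simp [minDegree_of_subsingleton]
    · exact G.minDegree_lt_card.le
  have hceil : ⌈(Fintype.card V : ℝ) / r⌉ ≤ ((Fintype.card V - G.minDegree : ℕ) : ℤ) := by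
    refine Int.ceil_le.mpr ?_
    rcases r.eq_zero_or_pos with rfl | hr
    · simp
    rw [div_le_iff₀ (by exact_mod_cast hr), Int.cast_natCast, mul_comm]
    exact_mod_cast G.card_le_mul_card_sub_minDegree hfree
  have : (⌈(Fintype.card V : ℝ) / r⌉ : ℝ) ≤ ((Fintype.card V - G.minDegree : ℕ) : ℝ) := by
    exact_mod_cast hceil
  rw [Nat.cast_sub hδ] at this
  linarith

theorem dotProduct_lapMatrix_mulVec_le {S : Finset V} {x : V → ℝ} (hzero : ∀ i ∉ S, x i = 0)
    (hconst : ∀ i ∈ S, ∀ j ∈ S, G.Adj i j → x i = x j) :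
    x ⬝ᵥ G.lapMatrix ℝ *ᵥ x ≤ #Sᶜ * (x ⬝ᵥ x) := by
  have hterm : ∀ i j, (if G.Adj i j then (x i - x j) ^ 2 else 0) ≤
      (if j ∈ S then 0 else x i ^ 2) + (if i ∈ S then 0 else x j ^ 2) := by
    intro i j
    by_cases hij : G.Adj i j
    · by_cases hi : i ∈ S <;> by_cases hj : j ∈ S
      · simp [hij, hi, hj, hconst i hi j hj hij]
      · simp [hij, hi, hj, hzero j hj]
      · simp [hij, hi, hj, hzero i hi]
      · simp [hij, hi, hj, hzero i hi, hzero j hj]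
    · rw [if_neg hij]; positivity
  have hhalf : ∑ i, ∑ j, (if j ∈ S then 0 else x i ^ 2) = #Sᶜ * (x ⬝ᵥ x) := by
    simp [sum_ite, filter_not, dotProduct, mul_sum, sq, compl_eq_univ_sdiff]
  rw [← toLinearMap₂'_apply', lapMatrix_toLinearMap₂', div_le_iff₀ two_pos]
  calc ∑ i, ∑ j, (if G.Adj i j then (x i - x j) ^ 2 else 0)
      ≤ ∑ i, ∑ j, ((if j ∈ S then 0 else x i ^ 2) + (if i ∈ S then 0 else x j ^ 2)) := by
        gcongr with i _ j; exact hterm i j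
    _ = #Sᶜ * (x ⬝ᵥ x) * 2 := by
        simp only [sum_add_distrib]
        rw [sum_comm (f := fun i j => if i ∈ S then 0 else x j ^ 2), hhalf]
        ring

lemma algConn_eq :
    algConn G = sInf {a : ℝ | ∃ x : V → ℝ, x ≠ 0 ∧ ∑ v, x v = 0 ∧
      a = (x ⬝ᵥ G.lapMatrix ℝ *ᵥ x) / (x ⬝ᵥ x)} := by
  unfold algConn
  congr!

theorem algConn_le_rayleigh {x : V → ℝ} (hx : x ≠ 0) (hsum : ∑ v, x v = 0) :
    algConn G ≤ (x ⬝ᵥ G.lapMatrix ℝ *ᵥ x) / (x ⬝ᵥ x) := by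
  rw [algConn_eq]
  refine csInf_le ⟨0, ?_⟩ ⟨x, hx, hsum, rfl⟩
  rintro _ ⟨y, -, -, rfl⟩
  have hL := (G.posSemidef_lapMatrix ℝ).dotProduct_mulVec_nonneg y
  rw [star_trivial] at hL
  exact div_nonneg hL (by simpa using dotProduct_star_self_nonneg y)

theorem algConn_le_degree {v w : V} (hvw : v ≠ w) (hnadj : ¬ G.Adj v w) :
    algConn G ≤ G.degree v := by
  set S := (G.neighborFinset v)ᶜ with hS
  have hvS : v ∈ S := by simp [hS]
  have hS2 : (1 : ℝ) < #S := by
    exact_mod_cast one_lt_card.mpr ⟨v, hvS, w, by simpa [hS] using hnadj, hvw⟩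
  set x : V → ℝ := fun i => (if i = v then (#S : ℝ) else 0) - (if i ∈ S then 1 else 0)
  have hx : x ≠ 0 := fun h => by
    have := congrFun h v
    simp only [x, if_pos hvS, if_true, Pi.zero_apply] at this
    linarith
  have hsum : ∑ i, x i = 0 := by simp [x, sum_sub_distrib]
  have hzero : ∀ i ∉ S, x i = 0 := fun i hi => by
    simp [x, hi, show i ≠ v by rintro rfl; exact hi hvS]
  have hconst : ∀ i ∈ S, ∀ j ∈ S, G.Adj i j → x i = x j := fun i hi j hj hij => by
    have hiv : i ≠ v := by rintro rfl; simp [hS, hij] at hj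
    have hjv : j ≠ v := by rintro rfl; simp [hS, hij.symm] at hi
    simp [x, hi, hj, hiv, hjv]
  have hxx : 0 < x ⬝ᵥ x := lt_of_le_of_ne (by simpa using dotProduct_star_self_nonneg x)
    (Ne.symm (dotProduct_self_eq_zero.not.mpr hx))
  calc algConn G ≤ (x ⬝ᵥ G.lapMatrix ℝ *ᵥ x) / (x ⬝ᵥ x) := G.algConn_le_rayleigh hx hsum
    _ ≤ #Sᶜ := div_le_of_le_mul₀ hxx.le (by positivity)
        (G.dotProduct_lapMatrix_mulVec_le hzero hconst)
    _ = G.degree v := by simp [hS]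

theorem algConn_le_minDegree (h : G ≠ ⊤) : algConn G ≤ G.minDegree := by
  obtain ⟨u, hu⟩ : ∃ u, ¬ G.IsUniversal u :=
    not_forall.mp (mt eq_top_iff_forall_isUniversal.mpr h)
  have : Nonempty V := ⟨u⟩
  obtain ⟨v, hv⟩ := G.exists_minimal_degree_vertex
  have hvu : ¬ G.IsUniversal v := fun hv' => by
    have := (G.degree_lt_card_sub_one u).mpr hu
    have := G.minDegree_le_degree u
    have := (G.degree_eq_card_sub_one v).mpr hv'
    omega
  obtain ⟨w, hvw, hnadj⟩ : ∃ w, v ≠ w ∧ ¬ G.Adj v w := by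
    simpa [IsUniversal] using hvu
  rw [hv]
  exact G.algConn_le_degree hvw hnadj

end SimpleGraph

theorem stmt3_general {n r : ℕ} (G : SimpleGraph (Fin n)) (hnc : G ≠ ⊤)
    (hfree : G.CliqueFree (r + 1)) :
    algConn G ≤ (n : ℝ) - ⌈(n : ℝ) / (r : ℝ)⌉ := by
  classical
  simpa using (G.algConn_le_minDegree hnc).trans (G.minDegree_le_card_sub_ceil_div hfree)

theorem stmt3 {n r : ℕ} (hr : 2 ≤ r) (G : SimpleGraph (Fin n)) (hnc : G ≠ ⊤)
    (hfree : G.CliqueFree (r + 1)) :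
    algConn G ≤ (n : ℝ) - ⌈(n : ℝ) / (r : ℝ)⌉ :=
  stmt3_general G hnc hfree
end

section
/- Let n = kr + t with 0 < t < r - 1, let H₁, …, H_t be edgeless graphs each on k+1 vertices, and let H be a graph on n - (k+1)t vertices with no clique of size r+1-t and with algebraic connectivity α(H) ≥ n - (k+1)(t+1). Then the join G = H₁ ∨ H₂ ∨ ⋯ ∨ H_t ∨ H satisfies α(G) = n - (k+1) = n - ⌈n/r⌉. -/
open SimpleGraph Matrix BigOperators

/-- The join `H₁ ∨ ⋯ ∨ H_t ∨ H` where `H₁, …, H_t` are edgeless graphs on `k+1`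
vertices each: vertex `(i, a)` lies in part `Hᵢ`, and all edges between distinct
parts (and between any part and `H`) are present. -/
def joinGraph {β : Type*} (t k : ℕ) (H : SimpleGraph β) :
    SimpleGraph ((Fin t × Fin (k + 1)) ⊕ β) :=
  SimpleGraph.fromRel (fun x y =>
    match x, y with
    | .inl a, .inl b => a.1 ≠ b.1
    | .inl _, .inr _ => True
    | .inr a, .inr b => H.Adj a b
    | _, _ => False)

/-! Write `Q_G x = xᵀ L(G) x`. Since `L(G) + L(Gᶜ) = L(Kₙ) = n I - J`, on vectors orthogonal
to `1` we have `Q_G = n ‖x‖² - Q_{Gᶜ}`; hence `α(G) = n - μ` as soon as `Q_{Gᶜ} ≤ μ ‖·‖²` everywhere,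
with equality at some nonzero `x ⊥ 1`. The complement of the join is `t` disjoint copies of
`K_{k+1}` together with `Hᶜ`. On a clique `Q ≤ (k+1) ‖·‖²`, with equality for zero-sum vectors,
and the bound on `α(H)` gives `Q_{Hᶜ} ≤ ((n - (k+1)t) - α(H)) ‖·‖² ≤ (k+1) ‖·‖²`, after projecting
onto `1^⊥`, which does not change `Q_{Hᶜ}`. -/

lemma Fintype.sum_apply_single {ι M N : Type*} [Fintype ι] [DecidableEq ι] [Zero M]
    [AddCommMonoid N] (f : M → N) (hf : f 0 = 0) (i : ι) (x : M) :
    ∑ j, f ((Pi.single i x : ι → M) j) = f x := by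
  simp [Pi.single_apply, apply_ite f, hf]

section dotProduct
variable {V W : Type*} [Fintype V] [Fintype W]

lemma dotProduct_self_nonneg (x : V → ℝ) : 0 ≤ x ⬝ᵥ x := by
  simpa using dotProduct_star_self_nonneg x

lemma dotProduct_self_sum (x : V ⊕ W → ℝ) :
    x ⬝ᵥ x = (x ∘ Sum.inl) ⬝ᵥ (x ∘ Sum.inl) + (x ∘ Sum.inr) ⬝ᵥ (x ∘ Sum.inr) := by
  simp [dotProduct, Fintype.sum_sum_type]

lemma dotProduct_self_prod (x : V × W → ℝ) :
    x ⬝ᵥ x = ∑ i, (fun b => x (i, b)) ⬝ᵥ (fun b => x (i, b)) := by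
  simp [dotProduct, Fintype.sum_prod_type]

end dotProduct

namespace SimpleGraph

section lapForm
variable {V : Type*} [Fintype V]

-- The instances are those of `algConn`, so that `algConn G` is by definition the infimum of
-- `G.lapForm x / (x ⬝ᵥ x)` over nonzero `x ⊥ 1`.
noncomputable def lapForm (G : SimpleGraph V) (x : V → ℝ) : ℝ :=
  letI := Classical.decEq V
  letI := Classical.decRel G.Adj
  x ⬝ᵥ (G.lapMatrix ℝ).mulVec x

lemma lapForm_eq_sum (G : SimpleGraph V) [DecidableRel G.Adj] (x : V → ℝ) :
    G.lapForm x = (∑ i, ∑ j, if G.Adj i j then (x i - x j) ^ 2 else 0) / 2 := by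
  classical
  rw [lapForm, ← toLinearMap₂'_apply', lapMatrix_toLinearMap₂']
  congr!

@[simp]
lemma lapForm_zero (G : SimpleGraph V) : G.lapForm 0 = 0 := by
  classical
  simp [lapForm_eq_sum]

lemma lapForm_nonneg (G : SimpleGraph V) (x : V → ℝ) : 0 ≤ G.lapForm x := by
  classical
  rw [lapForm_eq_sum]
  refine div_nonneg (Finset.sum_nonneg fun i _ => Finset.sum_nonneg fun j _ => ?_) zero_le_two
  split_ifs <;> positivity

lemma lapForm_add_const (G : SimpleGraph V) (x : V → ℝ) (c : ℝ) :
    G.lapForm (fun v => x v + c) = G.lapForm x := by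
  classical
  simp only [lapForm_eq_sum, add_sub_add_right_eq_sub]

lemma lapForm_top (x : V → ℝ) :
    (⊤ : SimpleGraph V).lapForm x = Fintype.card V * (x ⬝ᵥ x) - (∑ v, x v) ^ 2 := by
  classical
  have h : ∀ i j, (if (⊤ : SimpleGraph V).Adj i j then (x i - x j) ^ 2 else 0)
      = x i ^ 2 - 2 * x i * x j + x j ^ 2 := by
    intro i j
    split_ifs with hij
    · ring
    · rw [top_adj, not_not] at hij
      rw [hij]
      ring
  simp only [lapForm_eq_sum, h, Finset.sum_add_distrib, Finset.sum_sub_distrib, Finset.sum_const,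
    Finset.card_univ, nsmul_eq_mul, ← Finset.mul_sum, ← Finset.sum_mul, dotProduct, ← sq]
  ring

lemma lapForm_add_lapForm_compl (G : SimpleGraph V) (x : V → ℝ) :
    G.lapForm x + Gᶜ.lapForm x = (⊤ : SimpleGraph V).lapForm x := by
  classical
  simp only [lapForm_eq_sum, ← add_div, ← Finset.sum_add_distrib]
  congr 1
  refine Finset.sum_congr rfl fun i _ => Finset.sum_congr rfl fun j _ => ?_
  by_cases hij : i = j
  · simp [hij]
  · by_cases hG : G.Adj i j <;> simp [hG, hij]

lemma lapForm_of_sum_eq_zero (G : SimpleGraph V) {x : V → ℝ} (hx : ∑ v, x v = 0) :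
    G.lapForm x = Fintype.card V * (x ⬝ᵥ x) - Gᶜ.lapForm x := by
  rw [eq_sub_iff_add_eq, lapForm_add_lapForm_compl, lapForm_top, hx]
  ring

end lapForm

end SimpleGraph

section algConn
variable {V : Type*} [Fintype V]

lemma algConn_mul_le_lapForm (G : SimpleGraph V) {x : V → ℝ} (hx : ∑ v, x v = 0) :
    algConn G * (x ⬝ᵥ x) ≤ G.lapForm x := by
  rcases eq_or_ne x 0 with rfl | hx0
  · simp
  have hpos : 0 < x ⬝ᵥ x :=
    (dotProduct_self_nonneg x).lt_of_ne' (dotProduct_self_eq_zero.not.mpr hx0)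
  have hbdd : BddBelow {a : ℝ | ∃ y : V → ℝ, y ≠ 0 ∧ ∑ v, y v = 0 ∧
      a = G.lapForm y / (y ⬝ᵥ y)} := by
    refine ⟨0, ?_⟩
    rintro a ⟨y, -, -, rfl⟩
    exact div_nonneg (G.lapForm_nonneg y) (dotProduct_self_nonneg y)
  rw [← le_div_iff₀ hpos]
  exact csInf_le hbdd ⟨x, hx0, hx, rfl⟩

theorem algConn_eq_card_sub (G : SimpleGraph V) (μ : ℝ)
    (hle : ∀ x, Gᶜ.lapForm x ≤ μ * (x ⬝ᵥ x))
    (hext : ∃ x ≠ 0, ∑ v, x v = 0 ∧ Gᶜ.lapForm x = μ * (x ⬝ᵥ x)) :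
    algConn G = Fintype.card V - μ := by
  obtain ⟨x₀, hx₀, hsum₀, heq₀⟩ := hext
  refine IsLeast.csInf_eq ⟨⟨x₀, hx₀, hsum₀, ?_⟩, ?_⟩
  · have hdot : x₀ ⬝ᵥ x₀ ≠ 0 := dotProduct_self_eq_zero.not.mpr hx₀
    change _ = G.lapForm x₀ / _
    rw [G.lapForm_of_sum_eq_zero hsum₀, heq₀]
    field_simp
  · rintro a ⟨x, hx, hsum, rfl⟩
    have hpos : 0 < x ⬝ᵥ x :=
      (dotProduct_self_nonneg x).lt_of_ne' (dotProduct_self_eq_zero.not.mpr hx)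
    change _ ≤ G.lapForm x / _
    rw [le_div_iff₀ hpos, G.lapForm_of_sum_eq_zero hsum]
    linarith [hle x]

lemma lapForm_compl_le (G : SimpleGraph V) {c : ℝ} (hc : c ≤ algConn G)
    (hcV : c ≤ Fintype.card V) (x : V → ℝ) :
    Gᶜ.lapForm x ≤ (Fintype.card V - c) * (x ⬝ᵥ x) := by
  set n : ℝ := (Fintype.card V : ℝ)
  rcases isEmpty_or_nonempty V with hV | hV
  · classical
    simp [lapForm_eq_sum, dotProduct]
  have hn : 0 < n := by positivity
  set z : V → ℝ := fun v => x v + -((∑ v, x v) / n)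
  have hz : ∑ v, z v = 0 := by
    simp only [z, Finset.sum_add_distrib, Finset.sum_const, Finset.card_univ, nsmul_eq_mul]
    field_simp
    ring
  have hzx : n * (z ⬝ᵥ z) ≤ n * (x ⬝ᵥ x) := by
    have h := lapForm_top z
    rw [lapForm_add_const, lapForm_top, hz] at h
    nlinarith
  calc Gᶜ.lapForm x = Gᶜ.lapForm z := (lapForm_add_const _ _ _).symm
    _ = n * (z ⬝ᵥ z) - G.lapForm z := by rw [G.lapForm_of_sum_eq_zero hz]; ring
    _ ≤ (n - c) * (z ⬝ᵥ z) := by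
        nlinarith [algConn_mul_le_lapForm G hz, dotProduct_self_nonneg z]
    _ ≤ (n - c) * (x ⬝ᵥ x) := by
        gcongr
        exact le_of_mul_le_mul_left hzx hn

end algConn

namespace SimpleGraph

section operations
variable {V W : Type*} [Fintype V] [Fintype W]

lemma lapForm_sum (G₁ : SimpleGraph V) (G₂ : SimpleGraph W) (x : V ⊕ W → ℝ) :
    (G₁ ⊕g G₂).lapForm x = G₁.lapForm (x ∘ Sum.inl) + G₂.lapForm (x ∘ Sum.inr) := by
  classical
  simp [lapForm_eq_sum, Fintype.sum_sum_type, add_div]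

lemma lapForm_bot_boxProd (G : SimpleGraph W) (x : V × W → ℝ) :
    ((⊥ : SimpleGraph V) □ G).lapForm x = ∑ i, G.lapForm (fun b => x (i, b)) := by
  classical
  simp only [lapForm_eq_sum, Fintype.sum_prod_type, boxProd_adj, bot_adj, false_and, false_or,
    ← Finset.sum_div]
  congr 1
  refine Finset.sum_congr rfl fun i _ => ?_
  simp [and_comm, ite_and]

lemma lapForm_top_le (x : V → ℝ) :
    (⊤ : SimpleGraph V).lapForm x ≤ Fintype.card V * (x ⬝ᵥ x) := by
  rw [lapForm_top]
  nlinarith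

lemma lapForm_sum_le {G₁ : SimpleGraph V} {G₂ : SimpleGraph W} {μ : ℝ}
    (h₁ : ∀ y, G₁.lapForm y ≤ μ * (y ⬝ᵥ y)) (h₂ : ∀ y, G₂.lapForm y ≤ μ * (y ⬝ᵥ y))
    (x : V ⊕ W → ℝ) :
    (G₁ ⊕g G₂).lapForm x ≤ μ * (x ⬝ᵥ x) := by
  rw [lapForm_sum, dotProduct_self_sum, mul_add]
  exact add_le_add (h₁ _) (h₂ _)

lemma lapForm_bot_boxProd_le {G : SimpleGraph W} {μ : ℝ}
    (h : ∀ y, G.lapForm y ≤ μ * (y ⬝ᵥ y)) (x : V × W → ℝ) :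
    ((⊥ : SimpleGraph V) □ G).lapForm x ≤ μ * (x ⬝ᵥ x) := by
  rw [lapForm_bot_boxProd, dotProduct_self_prod, Finset.mul_sum]
  exact Finset.sum_le_sum fun i _ => h _

lemma exists_lapForm_top_eq (h : 1 < Fintype.card V) :
    ∃ y : V → ℝ, y ≠ 0 ∧ ∑ v, y v = 0 ∧
      (⊤ : SimpleGraph V).lapForm y = Fintype.card V * (y ⬝ᵥ y) := by
  classical
  obtain ⟨a, b, hab⟩ := Fintype.exists_pair_of_one_lt_card h
  refine ⟨Pi.single a 1 - Pi.single b 1, fun h0 => ?_, ?_, ?_⟩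
  · simpa [hab] using congr_fun h0 a
  · simp [Finset.sum_sub_distrib]
  · rw [lapForm_top]
    simp [Finset.sum_sub_distrib]

lemma exists_lapForm_sum_eq {G₁ : SimpleGraph V} (G₂ : SimpleGraph W) {μ : ℝ}
    (h : ∃ y ≠ 0, ∑ v, y v = 0 ∧ G₁.lapForm y = μ * (y ⬝ᵥ y)) :
    ∃ x ≠ 0, ∑ v, x v = 0 ∧ (G₁ ⊕g G₂).lapForm x = μ * (x ⬝ᵥ x) := by
  obtain ⟨y, hy, hsum, heq⟩ := h
  refine ⟨Sum.elim y 0, fun h0 => hy ?_, ?_, ?_⟩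
  · simpa using congr_arg (· ∘ Sum.inl) h0
  · simpa [Fintype.sum_sum_type] using hsum
  · rw [lapForm_sum, dotProduct_self_sum]
    simpa using heq

lemma exists_lapForm_bot_boxProd_eq [Nonempty V] {G : SimpleGraph W} {μ : ℝ}
    (h : ∃ y ≠ 0, ∑ v, y v = 0 ∧ G.lapForm y = μ * (y ⬝ᵥ y)) :
    ∃ x ≠ 0, ∑ v, x v = 0 ∧ ((⊥ : SimpleGraph V) □ G).lapForm x = μ * (x ⬝ᵥ x) := by
  classical
  obtain ⟨y, hy, hsum, heq⟩ := h
  obtain ⟨i⟩ := ‹Nonempty V›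
  refine ⟨fun p => (Pi.single i y : V → W → ℝ) p.1 p.2, fun h0 => hy ?_, ?_, ?_⟩
  · funext b
    simpa using congr_fun h0 (i, b)
  · rw [Fintype.sum_prod_type, Fintype.sum_apply_single (fun z : W → ℝ => ∑ b, z b) (by simp)]
    exact hsum
  · rw [lapForm_bot_boxProd, dotProduct_self_prod,
      Fintype.sum_apply_single G.lapForm G.lapForm_zero,
      Fintype.sum_apply_single (fun z : W → ℝ => z ⬝ᵥ z) (by simp)]
    exact heq

end operations

end SimpleGraph

section joinGraph
variable {β : Type*} (t k : ℕ) (H : SimpleGraph β)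

lemma compl_joinGraph :
    (joinGraph t k H)ᶜ = ((⊥ : SimpleGraph (Fin t)) □ (⊤ : SimpleGraph (Fin (k + 1)))) ⊕g Hᶜ := by
  ext (⟨i, a⟩ | b) (⟨j, c⟩ | d) <;> simp [joinGraph, Prod.ext_iff] <;> tauto

variable [Fintype β]

lemma lapForm_compl_joinGraph_le (hH : ∀ y, Hᶜ.lapForm y ≤ (k + 1) * (y ⬝ᵥ y))
    (x : (Fin t × Fin (k + 1)) ⊕ β → ℝ) :
    (joinGraph t k H)ᶜ.lapForm x ≤ (k + 1) * (x ⬝ᵥ x) := by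
  rw [compl_joinGraph]
  refine lapForm_sum_le (lapForm_bot_boxProd_le fun y => ?_) hH x
  simpa using lapForm_top_le y

lemma exists_lapForm_compl_joinGraph_eq (hk : 1 ≤ k) (ht : 0 < t) :
    ∃ x ≠ 0, ∑ v, x v = 0 ∧ (joinGraph t k H)ᶜ.lapForm x = (k + 1) * (x ⬝ᵥ x) := by
  have : Nonempty (Fin t) := ⟨⟨0, ht⟩⟩
  rw [compl_joinGraph]
  refine exists_lapForm_sum_eq _ (exists_lapForm_bot_boxProd_eq ?_)
  simpa using exists_lapForm_top_eq (V := Fin (k + 1)) (by simp; omega)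

end joinGraph

theorem stmt7_general {n r k t : ℕ} (hk : 1 ≤ k) (hn : n = k * r + t) (ht0 : 0 < t)
    (ht : t < r - 1) (H : SimpleGraph (Fin (n - (k + 1) * t)))
    (hHα : (n : ℝ) - ((k : ℝ) + 1) * ((t : ℝ) + 1) ≤ algConn H) :
    algConn (joinGraph t k H) = (n : ℝ) - ((k : ℝ) + 1) := by
  have hkt : (k + 1) * t ≤ n := by
    rw [hn, add_mul, one_mul]
    exact Nat.add_le_add_right (Nat.mul_le_mul_left k (by omega)) t
  have hcardH : (Fintype.card (Fin (n - (k + 1) * t)) : ℝ) = n - (k + 1) * t := by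
    rw [Fintype.card_fin, Nat.cast_sub hkt]
    push_cast
    ring
  have hH : ∀ y, Hᶜ.lapForm y ≤ (k + 1) * (y ⬝ᵥ y) := by
    intro y
    convert lapForm_compl_le H hHα (by rw [hcardH]; nlinarith) y using 2
    rw [hcardH]
    ring
  have hcard : Fintype.card ((Fin t × Fin (k + 1)) ⊕ Fin (n - (k + 1) * t)) = n := by
    rw [Fintype.card_sum, Fintype.card_prod, Fintype.card_fin, Fintype.card_fin, Fintype.card_fin,
      mul_comm, Nat.add_sub_cancel' hkt]
  rw [algConn_eq_card_sub _ _ (lapForm_compl_joinGraph_le t k H hH)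
    (exists_lapForm_compl_joinGraph_eq t k H hk ht0), hcard]

theorem stmt7 {n r k t : ℕ} (hk : 1 ≤ k) (hn : n = k * r + t) (ht0 : 0 < t)
    (ht : t < r - 1) (H : SimpleGraph (Fin (n - (k + 1) * t)))
    (hHfree : H.CliqueFree (r + 1 - t))
    (hHα : (n : ℝ) - ((k : ℝ) + 1) * ((t : ℝ) + 1) ≤ algConn H) :
    algConn (joinGraph t k H) = (n : ℝ) - ((k : ℝ) + 1) :=
  stmt7_general hk hn ht0 ht H hHα
end

section
/- Let G be a graph on n vertices with clique number r and algebraic connectivity α(G) > 0. Then r ≤ n + 1 - 4/(n·α(G)). -/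
/-!
Let `x ⊥ 𝟙` be nonzero, with maximum `x u` and minimum `x v`. Summing `(x u - x w) (x w - x v) ≥ 0`
over `w` gives `4 ‖x‖² ≤ n (x u - x v)²`. Along a shortest `u`–`v` path, Cauchy–Schwarz gives
`(x u - x v)² ≤ d(u, v) · xᵀ L x`. The distance layers from `u` up to `d(u, v)` are all nonempty,
while a maximum clique meets at most two of them, so `d(u, v) ≤ n + 1 - r`. Hence every Rayleigh
quotient is at least `4 / (n (n + 1 - r))`, the kite-graph bound, and solving for `r` gives the
theorem. Positivity of `α(G)` forces `G` to be connected: otherwise the centred indicator vector of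
a component has Rayleigh quotient `0`.
-/

open SimpleGraph Matrix BigOperators

open Finset

theorem List.sq_sum_le_length_mul_sum_sq {α : Type*} [CommSemiring α] [LinearOrder α]
    [IsStrictOrderedRing α] [ExistsAddOfLE α] (l : List α) :
    l.sum ^ 2 ≤ l.length * (l.map (· ^ 2)).sum := by
  rw [← Fin.sum_univ_getElem, ← Fin.sum_univ_fun_getElem]
  simpa using sq_sum_le_card_mul_sum_sq (s := univ) (f := fun i : Fin l.length => l[i.1])

theorem Finset.four_mul_sum_sq_le_card_mul_sq_sub {ι : Type*} (s : Finset ι) {f : ι → ℝ}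
    {m M : ℝ} (hsum : ∑ i ∈ s, f i = 0) (hm : ∀ i ∈ s, m ≤ f i) (hM : ∀ i ∈ s, f i ≤ M) :
    4 * ∑ i ∈ s, f i ^ 2 ≤ #s * (M - m) ^ 2 := by
  have hsq : ∑ i ∈ s, f i ^ 2 ≤ ∑ i ∈ s, ((M + m) * f i - M * m) :=
    sum_le_sum fun i hi => by
      nlinarith [mul_nonneg (sub_nonneg.2 (hM i hi)) (sub_nonneg.2 (hm i hi))]
  rw [sum_sub_distrib, ← mul_sum, hsum, sum_const, nsmul_eq_mul] at hsq
  nlinarith [sq_nonneg (M + m), (#s).cast_nonneg (α := ℝ)]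

namespace SimpleGraph

variable {V : Type*} {G : SimpleGraph V} {u v : V}

theorem Walk.dist_getVert_of_length_eq_dist {p : G.Walk u v} (hp : p.length = G.dist u v)
    {i : ℕ} (hi : i ≤ p.length) : G.dist u (p.getVert i) = i := by
  rw [← length_eq_dist_of_subwalk hp (p.isSubwalk_take i), Walk.take_length]
  omega

theorem IsClique.card_image_dist_le_two [DecidableEq V] {s : Finset V}
    (hs : G.IsClique (s : Set V)) (u : V) : #(s.image (G.dist u)) ≤ 2 := by
  obtain rfl | hne := s.eq_empty_or_nonempty
  · simp
  obtain ⟨a, ha, hmin⟩ := s.exists_min_image (G.dist u) hne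
  calc #(s.image (G.dist u)) ≤ #{G.dist u a, G.dist u a + 1} := by
        refine card_le_card fun k hk => ?_
        obtain ⟨b, hb, rfl⟩ := mem_image.1 hk
        have hab := hmin b hb
        obtain rfl | hba := eq_or_ne b a
        · simp
        have := (hs ha hb hba.symm).diff_dist_adj (u := u)
        simp only [mem_insert, mem_singleton]
        omega
    _ ≤ 2 := card_le_two

theorem cliqueNum_le_card (G : SimpleGraph V) [Fintype V] : G.cliqueNum ≤ Fintype.card V := by
  obtain ⟨K, hK⟩ := G.exists_isNClique_cliqueNum
  exact hK.card_eq ▸ K.card_le_univ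

theorem Reachable.dist_add_cliqueNum_le [Fintype V] (h : G.Reachable u v) :
    G.dist u v + G.cliqueNum ≤ Fintype.card V + 1 := by
  classical
  obtain ⟨K, hK⟩ := G.exists_isNClique_cliqueNum
  obtain ⟨p, hp⟩ := h.exists_walk_length_eq_dist
  have hlayers : range (G.dist u v + 1) ⊆ univ.image (G.dist u) := fun i hi =>
    mem_image.2 ⟨p.getVert i, mem_univ _,
      p.dist_getVert_of_length_eq_dist hp (by simp at hi; omega)⟩
  have hsplit : univ.image (G.dist u) = (univ \ K).image (G.dist u) ∪ K.image (G.dist u) := by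
    rw [← image_union, sdiff_union_of_subset (subset_univ K)]
  have hcount : G.dist u v + 1 ≤ #((univ \ K).image (G.dist u)) + #(K.image (G.dist u)) := by
    simpa only [card_range] using (card_le_card hlayers).trans (hsplit ▸ card_union_le _ _)
  have houtside : #((univ \ K).image (G.dist u)) ≤ Fintype.card V - G.cliqueNum := by
    simpa only [card_univ_sdiff, hK.card_eq] using card_image_le (s := univ \ K) (f := G.dist u)
  have := hK.isClique.card_image_dist_le_two u
  have := G.cliqueNum_le_card
  omega

theorem Walk.sum_darts_sub {M : Type*} [AddCommGroup M] (x : V → M) (p : G.Walk u v) :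
    (p.darts.map fun d => x d.fst - x d.snd).sum = x u - x v := by
  induction p with
  | nil => simp
  | cons _ _ ih => simp [ih]

theorem sum_darts_eq_sum_adj [Fintype V] [DecidableRel G.Adj] {M : Type*} [AddCommMonoid M]
    (f : V → V → M) :
    ∑ d : G.Dart, f d.fst d.snd = ∑ i, ∑ j, if G.Adj i j then f i j else 0 := by
  rw [← Fintype.sum_prod_type', ← sum_filter]
  exact sum_bij' (fun d _ => d.toProd) (fun q hq => ⟨q, (mem_filter.1 hq).2⟩)
    (fun d _ => mem_filter.2 ⟨mem_univ _, d.adj⟩) (fun _ _ => mem_univ _)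
    (fun _ _ => rfl) (fun _ _ => rfl) (fun _ _ => rfl)

theorem Walk.IsTrail.two_mul_sum_darts_le [Fintype V] [DecidableRel G.Adj] {p : G.Walk u v}
    (hp : p.IsTrail) {f : V → V → ℝ} (hf : ∀ i j, 0 ≤ f i j) (hsymm : ∀ i j, f i j = f j i) :
    2 * (p.darts.map fun d => f d.fst d.snd).sum ≤ ∑ d : G.Dart, f d.fst d.snd := by
  classical
  set F : G.Dart → ℝ := fun d => f d.fst d.snd
  set D := p.darts.toFinset
  have hsum : (p.darts.map F).sum = ∑ d ∈ D, F d :=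
    (List.sum_toFinset F (hp.edges_nodup.of_map _)).symm
  have hsum_symm : ∑ d ∈ D.image Dart.symm, F d = ∑ d ∈ D, F d := by
    rw [sum_image fun _ _ _ _ h => Dart.symm_involutive.injective h]
    exact sum_congr rfl fun d _ => hsymm _ _
  -- a dart and its reverse carry the same edge, which a trail traverses only once
  have hdisj : Disjoint D (D.image Dart.symm) := by
    refine Finset.disjoint_left.2 fun d hd hd' => ?_
    obtain ⟨e, he, rfl⟩ := mem_image.1 hd'
    have := List.inj_on_of_nodup_map hp.edges_nodup (List.mem_toFinset.1 he)
      (List.mem_toFinset.1 hd) (Dart.edge_symm e).symm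
    exact e.symm_ne this.symm
  calc 2 * (p.darts.map F).sum = ∑ d ∈ D ∪ D.image Dart.symm, F d := by
        rw [sum_union hdisj, hsum_symm, hsum, two_mul]
    _ ≤ ∑ d, F d := sum_le_univ_sum_of_nonneg fun d => hf _ _

section Laplacian

variable [Fintype V] [DecidableEq V] [DecidableRel G.Adj]

theorem dotProduct_lapMatrix_mulVec (x : V → ℝ) :
    x ⬝ᵥ G.lapMatrix ℝ *ᵥ x = (∑ d : G.Dart, (x d.fst - x d.snd) ^ 2) / 2 := by
  rw [← toLinearMap₂'_apply', lapMatrix_toLinearMap₂',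
    sum_darts_eq_sum_adj fun i j => (x i - x j) ^ 2]

theorem dotProduct_lapMatrix_mulVec_nonneg (x : V → ℝ) : 0 ≤ x ⬝ᵥ G.lapMatrix ℝ *ᵥ x := by
  rw [dotProduct_lapMatrix_mulVec]
  positivity

theorem Walk.IsTrail.sq_sub_le_length_mul_dotProduct_lapMatrix_mulVec {p : G.Walk u v}
    (hp : p.IsTrail) (x : V → ℝ) :
    (x u - x v) ^ 2 ≤ p.length * (x ⬝ᵥ G.lapMatrix ℝ *ᵥ x) := by
  have hdarts := hp.two_mul_sum_darts_le (f := fun i j => (x i - x j) ^ 2)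
    (fun _ _ => sq_nonneg _) (fun _ _ => by ring)
  calc (x u - x v) ^ 2 = (p.darts.map fun d => x d.fst - x d.snd).sum ^ 2 := by
        rw [p.sum_darts_sub]
    _ ≤ p.length * (p.darts.map fun d => (x d.fst - x d.snd) ^ 2).sum := by
        simpa [List.map_map, Function.comp_def] using
          List.sq_sum_le_length_mul_sum_sq (p.darts.map fun d => x d.fst - x d.snd)
    _ ≤ p.length * (x ⬝ᵥ G.lapMatrix ℝ *ᵥ x) := by
        rw [dotProduct_lapMatrix_mulVec]
        gcongr
        linarith

variable (G) in
def lapRayleighQuotients : Set ℝ :=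
  {a | ∃ x : V → ℝ, x ≠ 0 ∧ ∑ v, x v = 0 ∧ a = (x ⬝ᵥ G.lapMatrix ℝ *ᵥ x) / (x ⬝ᵥ x)}

theorem algConn_eq_sInf_lapRayleighQuotients : algConn G = sInf G.lapRayleighQuotients := by
  unfold algConn lapRayleighQuotients
  congr!

theorem nonneg_of_mem_lapRayleighQuotients {a : ℝ} (ha : a ∈ G.lapRayleighQuotients) :
    0 ≤ a := by
  obtain ⟨x, -, -, rfl⟩ := ha
  exact div_nonneg (dotProduct_lapMatrix_mulVec_nonneg x) (dotProduct_self_star_nonneg x)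

theorem lapRayleighQuotients_nonempty_of_algConn_pos (h : 0 < algConn G) :
    G.lapRayleighQuotients.Nonempty := by
  rw [algConn_eq_sInf_lapRayleighQuotients] at h
  by_contra hS
  rw [Set.not_nonempty_iff_eq_empty.1 hS, Real.sInf_empty] at h
  exact h.false

theorem nonempty_of_algConn_pos (h : 0 < algConn G) : Nonempty V := by
  obtain ⟨-, x, hx, -⟩ := lapRayleighQuotients_nonempty_of_algConn_pos h
  obtain ⟨w, -⟩ := Function.ne_iff.1 hx
  exact ⟨w⟩

theorem algConn_nonpos_of_not_preconnected (h : ¬G.Preconnected) : algConn G ≤ 0 := by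
  obtain ⟨u, v, huv⟩ : ∃ u v, ¬G.Reachable u v := by simpa [Preconnected] using h
  set k : ℝ := ↑(#{w | G.Reachable u w})
  set N : ℝ := ↑(Fintype.card V)
  set y : V → ℝ := fun w => (if G.Reachable u w then 1 else 0) - k / N
  have hN : N ≠ 0 := Nat.cast_ne_zero.2 (Fintype.card_pos_iff.2 ⟨u⟩).ne'
  have hk : k ≠ 0 := Nat.cast_ne_zero.2 (card_ne_zero.2 ⟨u, by simp⟩)
  have hy : y ≠ 0 := fun hy => by simpa [y, huv, hk, hN] using congr_fun hy v
  have hsum : ∑ w, y w = 0 := by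
    simp [y, sum_sub_distrib, sum_boole, k, N, mul_div_cancel₀ _ hN]
  have hQ : y ⬝ᵥ G.lapMatrix ℝ *ᵥ y = 0 := by
    rw [← toLinearMap₂'_apply', lapMatrix_toLinearMap₂'_apply'_eq_zero_iff_forall_reachable]
    intro i j hij
    have : G.Reachable u i ↔ G.Reachable u j :=
      ⟨fun h' => h'.trans hij, fun h' => h'.trans hij.symm⟩
    simp [y, this]
  rw [algConn_eq_sInf_lapRayleighQuotients]
  exact csInf_le ⟨0, fun a ha => nonneg_of_mem_lapRayleighQuotients ha⟩
    ⟨y, hy, hsum, by simp [hQ]⟩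

theorem four_div_le_of_mem_lapRayleighQuotients (hG : G.Preconnected) {a : ℝ}
    (ha : a ∈ G.lapRayleighQuotients) :
    4 / (Fintype.card V * (Fintype.card V + 1 - G.cliqueNum)) ≤ a := by
  obtain ⟨x, hx, hsum, rfl⟩ := ha
  obtain ⟨w, -⟩ := Function.ne_iff.1 hx
  obtain ⟨u, -, hu⟩ := exists_max_image univ x ⟨w, mem_univ w⟩
  obtain ⟨v, -, hv⟩ := exists_min_image univ x ⟨w, mem_univ w⟩
  have hspread : 4 * (x ⬝ᵥ x) ≤ Fintype.card V * (x u - x v) ^ 2 := by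
    simpa [dotProduct, sq] using four_mul_sum_sq_le_card_mul_sq_sub univ hsum
      (fun i _ => hv i (mem_univ i)) (fun i _ => hu i (mem_univ i))
  obtain ⟨p, hp, hlen⟩ := (hG u v).exists_path_of_dist
  have hpath : (x u - x v) ^ 2 ≤ G.dist u v * (x ⬝ᵥ G.lapMatrix ℝ *ᵥ x) :=
    hlen ▸ hp.isTrail.sq_sub_le_length_mul_dotProduct_lapMatrix_mulVec x
  have hdist : (G.dist u v : ℝ) ≤ Fintype.card V + 1 - G.cliqueNum := by
    rw [le_sub_iff_add_le]
    exact_mod_cast Reachable.dist_add_cliqueNum_le (hG u v)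
  have hN : (0 : ℝ) < Fintype.card V := Nat.cast_pos.2 (Fintype.card_pos_iff.2 ⟨w⟩)
  have hr : (G.cliqueNum : ℝ) ≤ Fintype.card V := by exact_mod_cast G.cliqueNum_le_card
  have hxx : 0 < x ⬝ᵥ x :=
    (dotProduct_self_star_nonneg x).lt_of_ne' (dotProduct_self_eq_zero.not.2 hx)
  rw [div_le_div_iff₀ (mul_pos hN (by linarith)) hxx]
  calc 4 * (x ⬝ᵥ x) ≤ Fintype.card V * (x u - x v) ^ 2 := hspread
    _ ≤ Fintype.card V * ((Fintype.card V + 1 - G.cliqueNum) * (x ⬝ᵥ G.lapMatrix ℝ *ᵥ x)) := by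
      gcongr
      exact hpath.trans (by gcongr; exact dotProduct_lapMatrix_mulVec_nonneg x)
    _ = _ := by ring

theorem four_div_le_algConn (h : 0 < algConn G) :
    4 / (Fintype.card V * (Fintype.card V + 1 - G.cliqueNum)) ≤ algConn G := by
  have hG : G.Preconnected := by
    by_contra hG
    exact (algConn_nonpos_of_not_preconnected hG).not_gt h
  have hS := lapRayleighQuotients_nonempty_of_algConn_pos h
  rw [algConn_eq_sInf_lapRayleighQuotients]
  exact le_csInf hS fun a ha => four_div_le_of_mem_lapRayleighQuotients hG ha

end Laplacian

end SimpleGraph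

theorem stmt14 {n r : ℕ} (G : SimpleGraph (Fin n)) (hclique : G.cliqueNum = r)
    (hα : 0 < algConn G) :
    (r : ℝ) ≤ (n : ℝ) + 1 - 4 / ((n : ℝ) * algConn G) := by
  classical
  have hbound := four_div_le_algConn hα
  have hn : (0 : ℝ) < n := by
    have := nonempty_of_algConn_pos hα
    simpa using Fintype.card_pos (α := Fin n)
  have hr : (r : ℝ) ≤ n := by
    have := G.cliqueNum_le_card
    rw [hclique, Fintype.card_fin] at this
    exact_mod_cast this
  rw [Fintype.card_fin, hclique, div_le_iff₀ (mul_pos hn (by linarith))] at hbound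
  rw [le_sub_comm, div_le_iff₀ (by positivity)]
  linarith
end
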